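/- The twisted sphere X is compact and locally Hausdorff, i.e., every point of X has an open neighborhood whose subspace topology is Hausdorff. -/

import Mathlib

noncomputable section

/-- The 2-sphere, realized as the unit sphere `{(c,z) : |c|² + z² = 1}` in `ℂ × ℝ`,
with the subspace topology. -/
def TwoSphere : Set (ℂ × ℝ) := {p | ‖p.1‖ ^ 2 + p.2 ^ 2 = 1}

/-- The relation `r₀` on `S²`: `r₀ (c,z) (c',z')` iff `z ≠ 0`, `c' = -c` and `z' = z`. -/
def sphRel (a b : TwoSphere) : Prop :=
  a.1.2 ≠ 0 ∧ b.1.1 = -a.1.1 ∧ b.1.2 = a.1.2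

/-- The twisted sphere `X`: the quotient of `S²` by the equivalence relation generated
by `r₀`, with the quotient topology. -/
abbrev TwistedSphere : Type := Quot (Relation.EqvGen sphRel)

/-- The quotient map `q : S² → X`. -/
abbrev sphQ : TwoSphere → TwistedSphere := Quot.mk (Relation.EqvGen sphRel)

/-!
The map `(c, z) ↦ (c², z)` is constant on the classes of `≈`, so it descends to a continuous map
`F : X → ℂ × ℝ`. Points of `S²` with the same image are equal or differ by the twist
`(c, z) ↦ (-c, z)`, and twisted pairs are identified in `X` unless they lie on the equator. So `F`
is injective on `q(U)` whenever `U` contains no twisted pair of equator points, e.g. for `U` the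
points off the equator together with the open half-sphere `Re (c c̄₀) > 0` around `(c₀, z₀)`.
Since the saturation of an open set `U` is `U` plus the twist of its off-equator part, `q` is open,
and `q(U)` is an open neighbourhood of `q (c₀, z₀)` injecting continuously into a Hausdorff space.
-/

open Set

lemma Set.InjOn.t2Space {X Y : Type*} [TopologicalSpace X] [TopologicalSpace Y] [T2Space Y]
    {f : X → Y} {s : Set X} (hinj : InjOn f s) (hf : Continuous f) : T2Space s :=
  T2Space.of_injective_continuous (injOn_iff_injective.1 hinj) (hf.comp continuous_subtype_val)

namespace TwistedSphere

lemma isCompact_twoSphere : IsCompact TwoSphere := by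
  have hclosed : IsClosed TwoSphere :=
    isClosed_eq (by fun_prop) continuous_const
  have hbdd : TwoSphere ⊆ Metric.closedBall (0 : ℂ × ℝ) 1 := by
    intro p (hp : ‖p.1‖ ^ 2 + p.2 ^ 2 = 1)
    rw [mem_closedBall_zero_iff, Prod.norm_def, Real.norm_eq_abs]
    refine max_le ?_ ?_
    · nlinarith [norm_nonneg p.1]
    · nlinarith [abs_nonneg p.2, sq_abs p.2]
  exact Metric.isCompact_of_isClosed_isBounded hclosed (Metric.isBounded_closedBall.subset hbdd)

def twist (p : TwoSphere) : TwoSphere :=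
  ⟨(-p.1.1, p.1.2), by simpa only [TwoSphere, mem_ofPred_eq, norm_neg] using p.2⟩

@[simp]
lemma twist_twist (p : TwoSphere) : twist (twist p) = p := by
  simp [twist]

lemma continuous_twist : Continuous twist := by
  unfold twist; fun_prop

lemma sphRel_iff {a b : TwoSphere} : sphRel a b ↔ a.1.2 ≠ 0 ∧ b = twist a := by
  simp only [sphRel, twist, Subtype.ext_iff, Prod.ext_iff]

def identified (a b : TwoSphere) : Prop :=
  b = a ∨ (a.1.2 ≠ 0 ∧ b = twist a)

lemma equivalence_identified : Equivalence identified where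
  refl _ := Or.inl rfl
  symm := by
    rintro a b (rfl | ⟨hz, rfl⟩)
    · exact Or.inl rfl
    · exact Or.inr ⟨hz, (twist_twist a).symm⟩
  trans := by
    rintro a b c (rfl | ⟨hz, rfl⟩) hbc
    · exact hbc
    · rcases hbc with rfl | ⟨-, rfl⟩
      · exact Or.inr ⟨hz, rfl⟩
      · exact Or.inl (twist_twist a)

lemma eqvGen_sphRel_iff {a b : TwoSphere} : Relation.EqvGen sphRel a b ↔ identified a b := by
  refine ⟨fun h => equivalence_identified.eqvGen_iff.1 (Relation.EqvGen.mono ?_ _ _ h), ?_⟩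
  · exact fun a b hab => Or.inr (sphRel_iff.1 hab)
  · rintro (rfl | h)
    · exact .refl _
    · exact .rel _ _ (sphRel_iff.2 h)

lemma sphQ_eq_sphQ_iff {a b : TwoSphere} : sphQ a = sphQ b ↔ identified a b := by
  rw [← eqvGen_sphRel_iff]
  exact ⟨fun h => (Relation.EqvGen.is_equivalence _).eqvGen_iff.1 (Quot.eqvGen_exact h),
    Quot.sound⟩

lemma preimage_image_sphQ (U : Set TwoSphere) :
    sphQ ⁻¹' (sphQ '' U) = U ∪ ({p | p.1.2 ≠ 0} ∩ twist ⁻¹' U) := by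
  ext p
  simp only [mem_preimage, mem_image, sphQ_eq_sphQ_iff, identified, mem_union, mem_inter_iff,
    mem_ofPred_eq]
  constructor
  · rintro ⟨b, hb, rfl | ⟨hz, rfl⟩⟩
    · exact Or.inl hb
    · exact Or.inr ⟨hz, by rwa [twist_twist]⟩
  · rintro (hp | ⟨hz, hp⟩)
    · exact ⟨p, hp, Or.inl rfl⟩
    · exact ⟨twist p, hp, Or.inr ⟨hz, (twist_twist p).symm⟩⟩

lemma isOpenMap_sphQ : IsOpenMap sphQ := by
  intro U hU
  rw [isOpen_coinduced, preimage_image_sphQ]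
  exact hU.union ((isOpen_ne_fun (by fun_prop) continuous_const).inter
    (hU.preimage continuous_twist))

def squareMap : TwistedSphere → ℂ × ℝ :=
  Quot.lift (fun p : TwoSphere => (p.1.1 ^ 2, p.1.2)) fun a b hab => by
    rcases eqvGen_sphRel_iff.1 hab with rfl | ⟨-, rfl⟩
    · rfl
    · simp [twist]

lemma continuous_squareMap : Continuous squareMap :=
  continuous_quot_lift _ (by fun_prop)

lemma squareMap_sphQ_eq_iff {a b : TwoSphere} :
    squareMap (sphQ a) = squareMap (sphQ b) ↔ b = a ∨ b = twist a := by
  simp only [squareMap, twist, Subtype.ext_iff, Prod.ext_iff]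
  rw [sq_eq_sq_iff_eq_or_eq_neg]
  grind

def hausdorffNhd (a : TwoSphere) : Set TwoSphere :=
  {p | p.1.2 ≠ 0 ∨ 0 < (p.1.1 * starRingEnd ℂ a.1.1).re}

lemma isOpen_hausdorffNhd (a : TwoSphere) : IsOpen (hausdorffNhd a) :=
  (isOpen_ne_fun (by fun_prop) continuous_const).union (isOpen_lt continuous_const
    (g := fun p : TwoSphere => (p.1.1 * starRingEnd ℂ a.1.1).re) (by fun_prop))

lemma mem_hausdorffNhd (a : TwoSphere) : a ∈ hausdorffNhd a := by
  by_cases hz : a.1.2 = 0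
  · have ha : ‖a.1.1‖ ^ 2 + a.1.2 ^ 2 = 1 := a.2
    rw [hz, zero_pow two_ne_zero, add_zero] at ha
    right
    rw [Complex.mul_conj, Complex.ofReal_re, Complex.normSq_eq_norm_sq, ha]
    exact one_pos
  · exact Or.inl hz

lemma injOn_squareMap_image_hausdorffNhd (a : TwoSphere) :
    InjOn squareMap (sphQ '' hausdorffNhd a) := by
  rintro _ ⟨p, hp, rfl⟩ _ ⟨p', hp', rfl⟩ h
  rw [sphQ_eq_sphQ_iff]
  rcases squareMap_sphQ_eq_iff.1 h with rfl | rfl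
  · exact Or.inl rfl
  · refine Or.inr ⟨fun hz => ?_, rfl⟩
    have hre : 0 < (p.1.1 * starRingEnd ℂ a.1.1).re := hp.resolve_left (not_not.2 hz)
    have hre' : 0 < (-p.1.1 * starRingEnd ℂ a.1.1).re := hp'.resolve_left (not_not.2 hz)
    rw [neg_mul, Complex.neg_re] at hre'
    linarith

end TwistedSphere

open TwistedSphere

theorem stmt_6 :
    CompactSpace TwistedSphere ∧
    (∀ x : TwistedSphere, ∃ O : Set TwistedSphere, IsOpen O ∧ x ∈ O ∧ T2Space ↥O) := by
  have : CompactSpace TwoSphere := isCompact_iff_compactSpace.1 isCompact_twoSphere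
  refine ⟨Quot.compactSpace, fun x => ?_⟩
  obtain ⟨a, rfl⟩ := Quot.exists_rep x
  exact ⟨sphQ '' hausdorffNhd a, isOpenMap_sphQ _ (isOpen_hausdorffNhd a),
    mem_image_of_mem _ (mem_hausdorffNhd a),
    (injOn_squareMap_image_hausdorffNhd a).t2Space continuous_squareMap⟩
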